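/- arXiv:2303.17203 — 6 statements merged into one kernel-verified Lean document; each statement's English description precedes it below -/
import Mathlib

section
/- For the d-dimensional discrete Fourier transform matrix F with entries F_{ij} = ω^{ij}/√d where ω = e^{2πi/d}, any square submatrix obtained by selecting rows i₀, i₀+m, i₀+2m, ..., i₀+(u-1)m (for m a proper divisor of d, with u ≤ d/m) and columns j₀, j₁, ..., j_{u-1} that are pairwise distinct modulo d/m, is invertible. -/
open Complex Finset
open scoped Classical

noncomputable def dftOmega (d : ℕ) : ℂ := Complex.exp (2 * Real.pi * Complex.I / d)

lemma dft_pow_modEq {ζ : ℂ} {n a b : ℕ} (h : IsPrimitiveRoot ζ n) (hz : ζ ≠ 0)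
    (hab : ζ ^ a = ζ ^ b) : a ≡ b [MOD n] := by
  rcases le_total a b with hle | hle
  · have h1 : ζ ^ a * ζ ^ (b - a) = ζ ^ a * 1 := by
      rw [mul_one, ← pow_add, Nat.add_sub_cancel' hle, hab]
    have h2 : ζ ^ (b - a) = 1 := mul_left_cancel₀ (pow_ne_zero _ hz) h1
    exact (Nat.modEq_iff_dvd' hle).mpr ((h.pow_eq_one_iff_dvd _).mp h2)
  · have h1 : ζ ^ b * ζ ^ (a - b) = ζ ^ b * 1 := by
      rw [mul_one, ← pow_add, Nat.add_sub_cancel' hle, hab]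
    have h2 : ζ ^ (a - b) = 1 := mul_left_cancel₀ (pow_ne_zero _ hz) h1
    exact ((Nat.modEq_iff_dvd' hle).mpr ((h.pow_eq_one_iff_dvd _).mp h2)).symm

/-- Any square submatrix of the d-dimensional DFT matrix obtained by selecting
rows `i₀, i₀+m, …, i₀+(u-1)m` (m a proper divisor of d, u ≤ d/m) and columns
pairwise distinct modulo `d/m` is invertible. -/
theorem dft_submatrix_invertible (d m u i₀ : ℕ) (hd : 2 ≤ d)
    (hm : m ∣ d) (hmd : m ≠ d) (hmpos : 0 < m)
    (hu : u ≤ d / m)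
    (hrows : i₀ + (u - 1) * m ≤ d - 1)
    (j : Fin u → Fin d)
    (hj : ∀ k l : Fin u, k ≠ l → ((j k : ℕ)) % (d / m) ≠ ((j l : ℕ)) % (d / m))
    (M : Matrix (Fin u) (Fin u) ℂ)
    (hM : ∀ k l : Fin u, M k l = dftOmega d ^ ((i₀ + (k : ℕ) * m) * (j l : ℕ)) / Real.sqrt d) :
    IsUnit M.det := by
  have hd0 : d ≠ 0 := by omega
  have hprim : IsPrimitiveRoot (dftOmega d) d := by
    simpa [dftOmega, mul_comm] using Complex.isPrimitiveRoot_exp d hd0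
  have hord : orderOf (dftOmega d) = d := (hprim.eq_orderOf).symm
  have hω0 : dftOmega d ≠ 0 := by
    simp [dftOmega, Complex.exp_ne_zero]
  have hs0 : (Real.sqrt d : ℂ) ≠ 0 := by
    simp only [ne_eq, Complex.ofReal_eq_zero]
    positivity
  set x : Fin u → ℂ := fun l => dftOmega d ^ (m * (j l : ℕ)) with hx
  set c : Fin u → ℂ := fun l => dftOmega d ^ (i₀ * (j l : ℕ)) / (Real.sqrt d : ℂ) with hc
  have hMeq : M = (Matrix.diagonal c * Matrix.vandermonde x).transpose := by
    ext k l
    rw [Matrix.transpose_apply, Matrix.diagonal_mul, Matrix.vandermonde, hM]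
    simp only [hx, hc, Matrix.of_apply]
    rw [div_mul_eq_mul_div, ← pow_mul, ← pow_add]
    congr 2
    ring
  have hxinj : Function.Injective x := by
    intro k l hkl
    by_contra hne
    apply hj k l hne
    simp only [hx] at hkl
    have hmod : m * (j k : ℕ) ≡ m * (j l : ℕ) [MOD d] :=
      dft_pow_modEq hprim hω0 hkl
    have hd' : d = m * (d / m) := (Nat.mul_div_cancel' hm).symm
    have hmod' : m * (j k : ℕ) ≡ m * (j l : ℕ) [MOD m * (d / m)] := by
      rw [← hd']; exact hmod
    exact Nat.ModEq.mul_left_cancel' (by omega) hmod'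
  rw [hMeq, Matrix.det_transpose, Matrix.det_mul, Matrix.det_diagonal,
    Matrix.det_vandermonde]
  apply IsUnit.mul <;> rw [isUnit_iff_ne_zero]
  · exact Finset.prod_ne_zero_iff.2 fun l _ =>
      div_ne_zero (pow_ne_zero _ hω0) hs0
  · refine Finset.prod_ne_zero_iff.2 fun k _ => Finset.prod_ne_zero_iff.2 fun l hl => ?_
    exact sub_ne_zero.2 fun h => (Finset.mem_Ioi.mp hl).ne' (hxinj h)
end

section
/- Let d ≥ 2 and let ψ ∈ C^d be a nonzero vector. Let A be the standard basis {e_i} and B the Fourier basis {f_j} where f_j has i-th entry ω^{ij}/√d, ω = e^{2πi/d}. Define n_A(ψ) = #{i : ⟨e_i, ψ⟩ ≠ 0} and n_B(ψ) = #{j : ⟨f_j, ψ⟩ ≠ 0}. If the Kirkwood-Dirac distribution Q_{ij} = ⟨e_i,ψ⟩⟨ψ,f_j⟩⟨f_j,e_i⟩ satisfies Q_{ij} ≥ 0 (real and nonnegative) for all i,j, then n_A(ψ)·n_B(ψ) ≤ d. -/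
/-!
Fix `i, i'` in the support of `ψ` and `j, j'` in the support of its Fourier transform. The four
KD entries `Q i j`, `Q i' j'`, `Q i j'`, `Q i' j` are then positive reals, and
`Q i j * Q i' j' = Q i j' * Q i' j * ω ^ (-(i - i') * (j - j'))`, so this power of `ω` is `1`,
i.e. `d ∣ (i - i') * (j - j')`. If `a` and `b` are the gcds of `d` with all differences `i - i'`,
resp. `j - j'`, then `d ∣ a * b`, while each support lies in one residue class mod `a`, resp. `b`,
hence has at most `d / a`, resp. `d / b`, elements; and `(d / a) * (d / b) ≤ d`.
-/

open Complex Finset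
open scoped Classical

/-- The j-th Fourier basis vector of `ℂ^d`, with i-th entry `ω^{ij}/√d`. -/
noncomputable def fourierVec (d : ℕ) (j : Fin d) : Fin d → ℂ :=
  fun i => dftOmega d ^ ((i : ℕ) * (j : ℕ)) / Real.sqrt d

/-- The j-th Fourier coefficient `⟨f_j, ψ⟩ = (1/√d)∑_i ω^{−ij} ψ(i)`. -/
noncomputable def dftCoeff (d : ℕ) (ψ : Fin d → ℂ) (j : Fin d) : ℂ :=
  ∑ i, (starRingEnd ℂ) (fourierVec d j i) * ψ i

/-- Number of nonzero standard-basis coordinates of ψ. -/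
noncomputable def nA (d : ℕ) (ψ : Fin d → ℂ) : ℕ :=
  (Finset.univ.filter fun i => ψ i ≠ 0).card

/-- Number of nonzero Fourier coefficients of ψ. -/
noncomputable def nB (d : ℕ) (ψ : Fin d → ℂ) : ℕ :=
  (Finset.univ.filter fun j => dftCoeff d ψ j ≠ 0).card

/-- Kirkwood-Dirac distribution `Q_{ij} = ⟨e_i,ψ⟩⟨ψ,f_j⟩⟨f_j,e_i⟩` of ψ with
respect to the standard basis and the Fourier basis. -/
noncomputable def KD (d : ℕ) (ψ : Fin d → ℂ) (i j : Fin d) : ℂ :=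
  ψ i * (∑ k, (starRingEnd ℂ) (ψ k) * fourierVec d j k) * (starRingEnd ℂ) (fourierVec d j i)

theorem dvd_gcd_finset_gcd_mul {α ι : Type*} [CommMonoidWithZero α] [NormalizedGCDMonoid α]
    {s : Finset ι} {f : ι → α} {d c : α} (h : ∀ i ∈ s, d ∣ f i * c) :
    d ∣ gcd d (s.gcd f) * c :=
  (gcd_mul_right' c d _).dvd_iff_dvd_right.mp <| dvd_gcd (dvd_mul_right d c) <|
    (s.gcd_mul_right' f c).dvd_iff_dvd_right.mp (Finset.dvd_gcd h)

theorem card_le_div_of_forall_modEq {d g : ℕ} (hg : g ∣ d) {s : Finset (Fin d)} {a : ℕ}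
    (h : ∀ i ∈ s, (i : ℕ) ≡ a [MOD g]) : #s ≤ d / g := by
  rcases g.eq_zero_or_pos with rfl | hg₀
  · obtain rfl := zero_dvd_iff.mp hg
    simp [Finset.eq_empty_of_isEmpty s]
  calc #s = #(s.map Fin.valEmbedding) := (card_map _).symm
    _ ≤ #{x ∈ range d | x ≡ a [MOD g]} := card_le_card fun x hx => by
        obtain ⟨i, hi, rfl⟩ := mem_map.mp hx
        exact mem_filter.mpr ⟨mem_range.mpr i.isLt, h i hi⟩
    _ = d / g := by
        rw [← Nat.count_eq_card_filter_range, Nat.count_modEq_card _ hg₀,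
          Nat.mod_eq_zero_of_dvd hg]
        simp

theorem natAbs_gcd_natCast_dvd (d : ℕ) (x : ℤ) : (gcd (d : ℤ) x).natAbs ∣ d := by
  simpa using Int.natAbs_dvd_natAbs.mpr (gcd_dvd_left (d : ℤ) x)

theorem card_le_div_natAbs_gcd {d : ℕ} (s : Finset (Fin d)) (i₀ : Fin d) :
    #s ≤ d / (gcd (d : ℤ) (s.gcd fun i => (i : ℤ) - i₀)).natAbs := by
  refine card_le_div_of_forall_modEq (natAbs_gcd_natCast_dvd d _) (a := i₀) fun i hi => ?_
  refine (Nat.modEq_iff_dvd.mpr ?_).symm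
  exact Int.natAbs_dvd.mpr ((gcd_dvd_right _ _).trans (Finset.gcd_dvd hi))

theorem Nat.div_mul_div_le_of_dvd_mul {a b d : ℕ} (ha : a ∣ d) (hb : b ∣ d) (hd : d ∣ a * b) :
    d / a * (d / b) ≤ d := by
  rcases d.eq_zero_or_pos with rfl | hd₀
  · simp
  rw [Nat.div_mul_div_comm ha hb]
  refine Nat.div_le_of_le_mul (Nat.mul_le_mul_right d (Nat.le_of_dvd ?_ hd))
  rw [Nat.pos_iff_ne_zero, Nat.mul_ne_zero_iff]
  exact ⟨ne_zero_of_dvd_ne_zero hd₀.ne' ha, ne_zero_of_dvd_ne_zero hd₀.ne' hb⟩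

theorem card_mul_card_le_of_dvd_mul_sub {d : ℕ} (s t : Finset (Fin d)) (i₀ j₀ : Fin d)
    (h : ∀ i ∈ s, ∀ j ∈ t, (d : ℤ) ∣ ((i : ℤ) - i₀) * ((j : ℤ) - j₀)) : #s * #t ≤ d := by
  set a : ℤ := gcd (d : ℤ) (s.gcd fun i => (i : ℤ) - i₀)
  set b : ℤ := gcd (d : ℤ) (t.gcd fun j => (j : ℤ) - j₀)
  have hab : (d : ℤ) ∣ b * a := dvd_gcd_finset_gcd_mul fun j hj => by
    rw [mul_comm]
    exact dvd_gcd_finset_gcd_mul fun i hi => h i hi j hj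
  have hd : d ∣ a.natAbs * b.natAbs := by
    simpa [mul_comm, Int.natAbs_mul] using Int.natAbs_dvd_natAbs.mpr hab
  calc #s * #t ≤ d / a.natAbs * (d / b.natAbs) :=
        Nat.mul_le_mul (card_le_div_natAbs_gcd s i₀) (card_le_div_natAbs_gcd t j₀)
    _ ≤ d := Nat.div_mul_div_le_of_dvd_mul
        (natAbs_gcd_natCast_dvd d _) (natAbs_gcd_natCast_dvd d _) hd

open scoped ComplexOrder

theorem Complex.eq_one_of_eq_mul_of_nonneg {a b w : ℂ} (ha : 0 ≤ a) (hb : 0 ≤ b) (hb₀ : b ≠ 0)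
    (hw : ‖w‖ = 1) (h : a = b * w) : w = 1 := by
  have hab : a = b := by
    rw [← norm_of_nonneg' ha, ← norm_of_nonneg' hb, h, norm_mul, hw, mul_one]
  exact mul_left_cancel₀ hb₀ (by rw [← h, hab, mul_one])

theorem starRingEnd_dftOmega (d : ℕ) : starRingEnd ℂ (dftOmega d) = (dftOmega d)⁻¹ := by
  rw [dftOmega, ← exp_conj, ← exp_neg]
  congr 1
  simp [map_div₀, conj_I, map_ofNat]
  ring

theorem dftOmega_ne_zero (d : ℕ) : dftOmega d ≠ 0 := exp_ne_zero _

theorem KD_eq_mul_zpow (d : ℕ) (ψ : Fin d → ℂ) (i j : Fin d) :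
    KD d ψ i j =
      ψ i * starRingEnd ℂ (dftCoeff d ψ j) * dftOmega d ^ (-((i : ℤ) * j)) / Real.sqrt d := by
  have hcoeff : ∑ k, starRingEnd ℂ (ψ k) * fourierVec d j k = starRingEnd ℂ (dftCoeff d ψ j) := by
    simp [dftCoeff, mul_comm]
  rw [KD, hcoeff, zpow_neg, ← Nat.cast_mul, zpow_natCast]
  simp [fourierVec, map_div₀, starRingEnd_dftOmega, mul_div_assoc]

theorem KD_ne_zero {d : ℕ} {ψ : Fin d → ℂ} {i j : Fin d} (hi : ψ i ≠ 0)
    (hj : dftCoeff d ψ j ≠ 0) : KD d ψ i j ≠ 0 := by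
  have hd : (Real.sqrt d : ℂ) ≠ 0 := by
    simpa using Nat.pos_iff_ne_zero.mp i.pos
  rw [KD_eq_mul_zpow]
  exact div_ne_zero (mul_ne_zero (mul_ne_zero hi (by simpa using hj))
    (zpow_ne_zero _ (dftOmega_ne_zero d))) hd

theorem KD_mul_KD (d : ℕ) (ψ : Fin d → ℂ) (i i' j j' : Fin d) :
    KD d ψ i j * KD d ψ i' j' =
      KD d ψ i j' * KD d ψ i' j * dftOmega d ^ (-(((i : ℤ) - i') * ((j : ℤ) - j'))) := by
  set ω := dftOmega d
  have hω₀ : ω ≠ 0 := dftOmega_ne_zero d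
  have hω : ω ^ (-((i : ℤ) * j)) * ω ^ (-((i' : ℤ) * j')) =
      ω ^ (-((i : ℤ) * j')) * ω ^ (-((i' : ℤ) * j)) * ω ^ (-(((i : ℤ) - i') * ((j : ℤ) - j'))) := by
    simp only [← zpow_add₀ hω₀]
    ring_nf
  simp only [KD_eq_mul_zpow]
  linear_combination (ψ i * ψ i' * starRingEnd ℂ (dftCoeff d ψ j) *
    starRingEnd ℂ (dftCoeff d ψ j') / (Real.sqrt d * Real.sqrt d)) * hω

theorem dvd_mul_sub_of_KD_nonneg {d : ℕ} {ψ : Fin d → ℂ} (h : ∀ i j, 0 ≤ KD d ψ i j)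
    {i i' j j' : Fin d} (hi : ψ i ≠ 0) (hi' : ψ i' ≠ 0) (hj : dftCoeff d ψ j ≠ 0)
    (hj' : dftCoeff d ψ j' ≠ 0) : (d : ℤ) ∣ ((i : ℤ) - i') * ((j : ℤ) - j') := by
  have hω : IsPrimitiveRoot (dftOmega d) d := isPrimitiveRoot_exp d i.pos.ne'
  have hpow : dftOmega d ^ (-(((i : ℤ) - i') * ((j : ℤ) - j'))) = 1 :=
    eq_one_of_eq_mul_of_nonneg (mul_nonneg (h i j) (h i' j')) (mul_nonneg (h i j') (h i' j))
      (mul_ne_zero (KD_ne_zero hi hj') (KD_ne_zero hi' hj))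
      (by rw [norm_zpow, hω.norm'_eq_one i.pos.ne', one_zpow]) (KD_mul_KD d ψ i i' j j')
  exact dvd_neg.mp ((hω.zpow_eq_one_iff_dvd _).mp hpow)

theorem kd_classical_support_le_general (d : ℕ) (ψ : Fin d → ℂ)
    (h : ∀ i j : Fin d, ∃ r : ℝ, 0 ≤ r ∧ KD d ψ i j = (r : ℂ)) :
    nA d ψ * nB d ψ ≤ d := by
  have hKD : ∀ i j, 0 ≤ KD d ψ i j := fun i j => by
    obtain ⟨r, hr, hQ⟩ := h i j
    exact hQ ▸ zero_le_real.mpr hr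
  rcases (univ.filter fun i => ψ i ≠ 0).eq_empty_or_nonempty with hs | ⟨i₀, hi₀⟩
  · simp [nA, hs]
  rcases (univ.filter fun j => dftCoeff d ψ j ≠ 0).eq_empty_or_nonempty with ht | ⟨j₀, hj₀⟩
  · simp [nB, ht]
  refine card_mul_card_le_of_dvd_mul_sub _ _ i₀ j₀ fun i hi j hj => ?_
  simp only [mem_filter, mem_univ, true_and] at hi hj hi₀ hj₀
  exact dvd_mul_sub_of_KD_nonneg hKD hi hi₀ hj hj₀

/-- If the Kirkwood-Dirac distribution of a nonzero `ψ ∈ ℂ^d` (w.r.t. the standard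
and Fourier bases) is everywhere a nonnegative real, then `n_A(ψ)·n_B(ψ) ≤ d`. -/
theorem kd_classical_support_le (d : ℕ) (hd : 2 ≤ d) (ψ : Fin d → ℂ) (hψ : ψ ≠ 0)
    (h : ∀ i j : Fin d, ∃ r : ℝ, 0 ≤ r ∧ KD d ψ i j = (r : ℂ)) :
    nA d ψ * nB d ψ ≤ d :=
  kd_classical_support_le_general d ψ h
end

section
/- Let d ≥ 2, let A be the standard basis of C^d and B the Fourier basis. A nonzero vector ψ ∈ C^d is KD nonclassical (i.e., some entry of its Kirkwood-Dirac distribution is negative or nonreal) if and only if n_A(ψ)·n_B(ψ) > d. -/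
open Complex Finset
open scoped Classical

/-!
Write `b = dftCoeff d ψ`. Then `KD i j = ψ i · conj (b j) · conj (f_j i)` has modulus
`|ψ i| |b j| / √d`, row sums `|ψ i|²` and column sums `|b j|²`.

If every entry is nonnegative, row and column sums are sums of moduli, which forces
`|ψ i| = ‖b‖₁ / √d` on the support of `ψ` and `|b j| = ‖ψ‖₁ / √d` on the support of `b`;
hence `‖ψ‖₁ = n_A n_B ‖ψ‖₁ / d`, i.e. `n_A n_B = d`.

Conversely, `|b j| ≤ ‖ψ‖₁ / √d`, Cauchy–Schwarz `‖ψ‖₁² ≤ n_A ‖ψ‖₂²` and Parseval give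
`‖ψ‖₂² = ∑_{b j ≠ 0} |b j|² ≤ n_B ‖ψ‖₁² / d ≤ n_A n_B ‖ψ‖₂² / d`, so `n_A n_B ≤ d` forces
`|b j| = ‖ψ‖₁ / √d` whenever `b j ≠ 0`. This is equality in the triangle inequality for
`b j = ∑_k conj (f_j k) ψ k`, so every summand is a nonnegative multiple of `b j`, and each
`KD i j` is nonnegative.
-/

open scoped ComplexOrder ComplexConjugate

lemma Complex.exists_nonneg_ofReal_eq_iff {z : ℂ} : (∃ r : ℝ, 0 ≤ r ∧ z = r) ↔ 0 ≤ z := by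
  refine ⟨fun ⟨r, hr, hz⟩ => hz ▸ zero_le_real.2 hr, fun hz => ⟨‖z‖, norm_nonneg z, ?_⟩⟩
  exact (norm_of_nonneg' hz).symm

lemma Complex.zero_le_mul_conj_sum_of_norm_sum_eq {ι : Type*} {s : Finset ι} {z : ι → ℂ}
    (h : ‖∑ k ∈ s, z k‖ = ∑ k ∈ s, ‖z k‖) {i : ι} (hi : i ∈ s) :
    0 ≤ z i * conj (∑ k ∈ s, z k) := by
  set S := ∑ k ∈ s, z k
  have hle : ∀ k ∈ s, (z k * conj S).re ≤ ‖z k‖ * ‖S‖ := fun k _ => by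
    simpa using re_le_norm (z k * conj S)
  have hsum : ∑ k ∈ s, (z k * conj S).re = ∑ k ∈ s, ‖z k‖ * ‖S‖ := by
    rw [← re_sum, ← Finset.sum_mul, mul_conj', ← Finset.sum_mul, ← h]
    norm_cast
    rw [sq]
  have hi_eq := (Finset.sum_eq_sum_iff_of_le hle).1 hsum i hi
  rw [← re_eq_norm, hi_eq, norm_mul, norm_conj]

lemma sq_sum_norm_le_card_support_mul {ι E : Type*} [Fintype ι] [NormedAddCommGroup E]
    (v : ι → E) : (∑ i, ‖v i‖) ^ 2 ≤ #{i | v i ≠ 0} * ∑ i, ‖v i‖ ^ 2 := by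
  have hsupp : ∀ f : ι → ℝ, (∀ i, v i = 0 → f i = 0) → ∑ i with v i ≠ 0, f i = ∑ i, f i :=
    fun f hf => Finset.sum_filter_of_ne fun i _ hfi => mt (hf i) hfi
  rw [← hsupp (‖v ·‖) (by simp), ← hsupp (‖v ·‖ ^ 2) (by simp)]
  exact sq_sum_le_card_mul_sum_sq

lemma sum_norm_eq_card_support_mul {ι E : Type*} [Fintype ι] [NormedAddCommGroup E]
    {v : ι → E} {c : ℝ} (h : ∀ i, ‖v i‖ ^ 2 = ‖v i‖ * c) :
    ∑ i, ‖v i‖ = #{i | v i ≠ 0} * c := by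
  rw [← Finset.sum_filter_of_ne fun i _ hi => norm_ne_zero_iff.1 hi, ← nsmul_eq_mul,
    ← Finset.sum_const]
  refine Finset.sum_congr rfl fun i hi => ?_
  have hvi : ‖v i‖ ≠ 0 := norm_ne_zero_iff.2 (Finset.mem_filter.1 hi).2
  exact mul_left_cancel₀ hvi (by rw [← sq, h])

lemma IsPrimitiveRoot.sum_pow_mul_inv_pow {K : Type*} [Field K] {ζ : K} {d a b : ℕ}
    (hζ : IsPrimitiveRoot ζ d) (ha : a < d) (hb : b < d) :
    ∑ j ∈ range d, ζ ^ (a * j) * (ζ ^ (b * j))⁻¹ = if a = b then (d : K) else 0 := by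
  have hζ0 : ζ ≠ 0 := hζ.ne_zero (by omega)
  have hterm : ∀ j, ζ ^ (a * j) * (ζ ^ (b * j))⁻¹ = (ζ ^ a / ζ ^ b) ^ j := fun j => by
    rw [pow_mul, pow_mul, div_pow, div_eq_mul_inv]
  simp_rw [hterm]
  split_ifs with hab
  · simp [hab, div_self (pow_ne_zero b hζ0)]
  · have hne : ζ ^ a / ζ ^ b ≠ 1 := fun h =>
      hab (hζ.pow_inj ha hb (div_eq_one_iff_eq (pow_ne_zero b hζ0) |>.1 h))
    rw [geom_sum_eq hne, div_pow, ← pow_mul, ← pow_mul, mul_comm a, mul_comm b, pow_mul,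
      pow_mul, hζ.pow_eq_one]
    simp

section Fourier

variable {d : ℕ}

lemma norm_dftOmega : ‖dftOmega d‖ = 1 := by
  rw [dftOmega, norm_exp]
  simp [div_re]

lemma isPrimitiveRoot_dftOmega (hd : d ≠ 0) : IsPrimitiveRoot (dftOmega d) d :=
  isPrimitiveRoot_exp d hd

lemma norm_fourierVec (j i : Fin d) : ‖fourierVec d j i‖ = (√d)⁻¹ := by
  simp [fourierVec, norm_dftOmega]

lemma conj_fourierVec_mul_fourierVec (j k i : Fin d) :
    conj (fourierVec d j k) * fourierVec d j i =
      dftOmega d ^ ((i : ℕ) * j) * (dftOmega d ^ ((k : ℕ) * j))⁻¹ / d := by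
  have hsqrt : ((√d : ℝ) : ℂ) * (√d : ℝ) = d := by
    rw [← ofReal_mul, Real.mul_self_sqrt (Nat.cast_nonneg d), ofReal_natCast]
  simp only [fourierVec, map_div₀, map_pow, conj_ofReal, ← inv_eq_conj norm_dftOmega, inv_pow]
  rw [div_mul_div_comm, hsqrt, mul_comm]

lemma sum_conj_fourierVec_mul_fourierVec (k i : Fin d) :
    ∑ j, conj (fourierVec d j k) * fourierVec d j i = if i = k then 1 else 0 := by
  have hd : d ≠ 0 := i.pos.ne'
  simp_rw [conj_fourierVec_mul_fourierVec, ← Finset.sum_div]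
  rw [Fin.sum_univ_eq_sum_range (fun j => dftOmega d ^ ((i : ℕ) * j) *
      (dftOmega d ^ ((k : ℕ) * j))⁻¹),
    (isPrimitiveRoot_dftOmega hd).sum_pow_mul_inv_pow i.isLt k.isLt]
  simp only [Fin.val_inj]
  split_ifs <;> simp [hd]

lemma sum_dftCoeff_mul_fourierVec (ψ : Fin d → ℂ) (i : Fin d) :
    ∑ j, dftCoeff d ψ j * fourierVec d j i = ψ i := by
  simp_rw [dftCoeff, Finset.sum_mul]
  rw [Finset.sum_comm]
  simp_rw [mul_right_comm _ (ψ _), ← Finset.sum_mul, sum_conj_fourierVec_mul_fourierVec]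
  simp

lemma sum_norm_conj_fourierVec_mul (ψ : Fin d → ℂ) (j : Fin d) :
    ∑ k, ‖conj (fourierVec d j k) * ψ k‖ = (∑ k, ‖ψ k‖) / √d := by
  simp_rw [norm_mul, norm_conj, norm_fourierVec, ← Finset.mul_sum]
  rw [inv_mul_eq_div]

lemma norm_dftCoeff_le (ψ : Fin d → ℂ) (j : Fin d) :
    ‖dftCoeff d ψ j‖ ≤ (∑ k, ‖ψ k‖) / √d :=
  (norm_sum_le _ _).trans_eq (sum_norm_conj_fourierVec_mul ψ j)

end Fourier

section KirkwoodDirac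

variable {d : ℕ} (ψ : Fin d → ℂ)

lemma KD_eq_mul_conj_dftCoeff (i j : Fin d) :
    KD d ψ i j = ψ i * conj (dftCoeff d ψ j) * conj (fourierVec d j i) := by
  simp_rw [KD, dftCoeff, map_sum, map_mul, conj_conj, mul_comm (conj (ψ _))]

lemma norm_KD (i j : Fin d) : ‖KD d ψ i j‖ = ‖ψ i‖ * (‖dftCoeff d ψ j‖ / √d) := by
  rw [KD_eq_mul_conj_dftCoeff, norm_mul, norm_mul, norm_conj, norm_conj, norm_fourierVec,
    mul_assoc, div_eq_mul_inv]

lemma sum_KD_left (j : Fin d) : ∑ i, KD d ψ i j = (‖dftCoeff d ψ j‖ : ℂ) ^ 2 := by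
  have hterm : ∀ i, KD d ψ i j = conj (dftCoeff d ψ j) * (conj (fourierVec d j i) * ψ i) :=
    fun i => by rw [KD_eq_mul_conj_dftCoeff]; ring
  rw [Finset.sum_congr rfl fun i _ => hterm i, ← Finset.mul_sum, ← dftCoeff, mul_comm, mul_conj']

lemma sum_KD_right (i : Fin d) : ∑ j, KD d ψ i j = (‖ψ i‖ : ℂ) ^ 2 := by
  simp_rw [KD_eq_mul_conj_dftCoeff, mul_assoc, ← map_mul, ← Finset.mul_sum, ← map_sum,
    sum_dftCoeff_mul_fourierVec, mul_conj']

lemma sum_norm_dftCoeff_sq : ∑ j, ‖dftCoeff d ψ j‖ ^ 2 = ∑ i, ‖ψ i‖ ^ 2 := by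
  have h : ∑ j, ∑ i, KD d ψ i j = ∑ i, ∑ j, KD d ψ i j := Finset.sum_comm
  simp_rw [sum_KD_left, sum_KD_right] at h
  exact_mod_cast h

lemma norm_dftCoeff_eq_of_card_mul_card_le (h : nA d ψ * nB d ψ ≤ d) {j : Fin d}
    (hj : dftCoeff d ψ j ≠ 0) : ‖dftCoeff d ψ j‖ = (∑ k, ‖ψ k‖) / √d := by
  set N := ∑ k, ‖ψ k‖
  set P := ∑ i, ‖ψ i‖ ^ 2
  set T : Finset (Fin d) := {j | dftCoeff d ψ j ≠ 0}
  have hbound : ∀ j ∈ T, ‖dftCoeff d ψ j‖ ^ 2 ≤ (N / √d) ^ 2 :=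
    fun j _ => pow_le_pow_left₀ (norm_nonneg _) (norm_dftCoeff_le ψ j) 2
  have hCS : N ^ 2 ≤ nA d ψ * P := sq_sum_norm_le_card_support_mul ψ
  have hPT : ∑ j ∈ T, ‖dftCoeff d ψ j‖ ^ 2 = P := by
    rw [Finset.sum_filter_of_ne fun j _ hj => by simpa using hj, sum_norm_dftCoeff_sq]
  have hsum : ∑ j ∈ T, (N / √d) ^ 2 ≤ ∑ j ∈ T, ‖dftCoeff d ψ j‖ ^ 2 := by
    rw [hPT, Finset.sum_const, nsmul_eq_mul, div_pow, Real.sq_sqrt (Nat.cast_nonneg d),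
      ← mul_div_assoc]
    refine div_le_of_le_mul₀ (Nat.cast_nonneg d) (by positivity) ?_
    calc (#T : ℝ) * N ^ 2 ≤ nB d ψ * (nA d ψ * P) := mul_le_mul_of_nonneg_left hCS (by positivity)
      _ = (nA d ψ * nB d ψ : ℕ) * P := by push_cast; ring
      _ ≤ P * d := by rw [mul_comm P]; gcongr
  have hj_sq := (Finset.sum_eq_sum_iff_of_le hbound).1
    (le_antisymm (Finset.sum_le_sum hbound) hsum) j (by simpa [T] using hj)
  exact (pow_left_inj₀ (norm_nonneg _) (by positivity) two_ne_zero).1 hj_sq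

lemma KD_nonneg_of_card_mul_card_le (h : nA d ψ * nB d ψ ≤ d) (i j : Fin d) :
    0 ≤ KD d ψ i j := by
  by_cases hj : dftCoeff d ψ j = 0
  · simp [KD_eq_mul_conj_dftCoeff, hj]
  have hKD : KD d ψ i j = conj (fourierVec d j i) * ψ i *
      conj (∑ k, conj (fourierVec d j k) * ψ k) := by
    rw [KD_eq_mul_conj_dftCoeff, dftCoeff]; ring
  rw [hKD]
  refine Complex.zero_le_mul_conj_sum_of_norm_sum_eq
    (z := fun k => conj (fourierVec d j k) * ψ k) ?_ (Finset.mem_univ i)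
  rw [← dftCoeff, sum_norm_conj_fourierVec_mul]
  exact norm_dftCoeff_eq_of_card_mul_card_le ψ h hj

lemma norm_sq_eq_of_KD_nonneg (h : ∀ i j, 0 ≤ KD d ψ i j) (i : Fin d) :
    ‖ψ i‖ ^ 2 = ‖ψ i‖ * ((∑ j, ‖dftCoeff d ψ j‖) / √d) := by
  have hsum : ‖ψ i‖ ^ 2 = ∑ j, ‖KD d ψ i j‖ := by
    have h' := sum_KD_right ψ i
    rw [Finset.sum_congr rfl fun j _ => (norm_of_nonneg' (h i j)).symm] at h'
    exact_mod_cast h'.symm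
  simp_rw [hsum, norm_KD, ← Finset.mul_sum, ← Finset.sum_div]

lemma norm_dftCoeff_sq_eq_of_KD_nonneg (h : ∀ i j, 0 ≤ KD d ψ i j) (j : Fin d) :
    ‖dftCoeff d ψ j‖ ^ 2 = ‖dftCoeff d ψ j‖ * ((∑ i, ‖ψ i‖) / √d) := by
  have hsum : ‖dftCoeff d ψ j‖ ^ 2 = ∑ i, ‖KD d ψ i j‖ := by
    have h' := sum_KD_left ψ j
    rw [Finset.sum_congr rfl fun i _ => (norm_of_nonneg' (h i j)).symm] at h'
    exact_mod_cast h'.symm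
  simp_rw [hsum, norm_KD, ← Finset.sum_mul, mul_div_left_comm]

lemma card_mul_card_eq_of_KD_nonneg (hψ : ψ ≠ 0) (h : ∀ i j, 0 ≤ KD d ψ i j) :
    nA d ψ * nB d ψ = d := by
  set N := ∑ i, ‖ψ i‖
  set M := ∑ j, ‖dftCoeff d ψ j‖
  have hN : N = nA d ψ * (M / √d) := sum_norm_eq_card_support_mul (norm_sq_eq_of_KD_nonneg ψ h)
  have hM : M = nB d ψ * (N / √d) :=
    sum_norm_eq_card_support_mul (norm_dftCoeff_sq_eq_of_KD_nonneg ψ h)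
  have hN0 : N ≠ 0 := fun hN0 => hψ <| funext fun i => by
    simpa using (Finset.sum_eq_zero_iff_of_nonneg fun i _ => norm_nonneg (ψ i)).1 hN0 i
      (Finset.mem_univ i)
  obtain ⟨i, -⟩ := Function.ne_iff.1 hψ
  have hsd : √(d : ℝ) * √d = d := Real.mul_self_sqrt (Nat.cast_nonneg d)
  have hsd0 : √(d : ℝ) ≠ 0 := Real.sqrt_ne_zero'.2 (by exact_mod_cast i.pos)
  have hN_scale : N * d = N * (nA d ψ * nB d ψ : ℕ) := by
    rw [← hsd]
    nth_rewrite 1 [hN]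
    rw [hM]
    push_cast
    field_simp
  exact_mod_cast (mul_left_cancel₀ hN0 hN_scale).symm

end KirkwoodDirac

theorem kd_nonclassical_iff_general (d : ℕ) (ψ : Fin d → ℂ) (hψ : ψ ≠ 0) :
    (¬ ∀ i j : Fin d, ∃ r : ℝ, 0 ≤ r ∧ KD d ψ i j = (r : ℂ)) ↔ d < nA d ψ * nB d ψ := by
  simp_rw [Complex.exists_nonneg_ofReal_eq_iff]
  rw [← not_le, not_iff_not]
  exact ⟨fun h => (card_mul_card_eq_of_KD_nonneg ψ hψ h).le, KD_nonneg_of_card_mul_card_le ψ⟩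

/-- A nonzero `ψ ∈ ℂ^d` is KD nonclassical with respect to the standard and
Fourier bases if and only if `n_A(ψ)·n_B(ψ) > d`. -/
theorem kd_nonclassical_iff (d : ℕ) (hd : 2 ≤ d) (ψ : Fin d → ℂ) (hψ : ψ ≠ 0) :
    (¬ ∀ i j : Fin d, ∃ r : ℝ, 0 ≤ r ∧ KD d ψ i j = (r : ℂ)) ↔ d < nA d ψ * nB d ψ :=
  kd_nonclassical_iff_general d ψ hψ
end

section
/- Let a, b be orthonormal families in C^d with ⟨a_i, b_j⟩ = 1/√d for all i ∈ {0,...,n_A−1} and j ∈ {0,...,n_B−1}, where {a_i}_{i<d} is an orthonormal basis. If n_B ≥ 2 then n_A ≤ d − n_A, i.e., n_A ≤ d/2. -/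
open Complex Finset
open scoped Classical
open Matrix

/-- Standard Hermitian inner product on `ℂ^d`, conjugate-linear in the first slot. -/
noncomputable def cinner (d : ℕ) (v w : Fin d → ℂ) : ℂ :=
  ∑ k, (starRingEnd ℂ) (v k) * w k

lemma cinner_conj (d : ℕ) (v w : Fin d → ℂ) :
    (starRingEnd ℂ) (cinner d v w) = cinner d w v := by
  simp [cinner, map_sum, mul_comm]

lemma col_orth (d : ℕ) (a : Fin d → (Fin d → ℂ))
    (ha : ∀ i i' : Fin d, cinner d (a i) (a i') = if i = i' then 1 else 0)
    (k l : Fin d) : ∑ i, a i k * (starRingEnd ℂ) (a i l) = if k = l then 1 else 0 := by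
  classical
  set A : Matrix (Fin d) (Fin d) ℂ := Matrix.of fun i k => a i k with hA
  have h1 : A * Aᴴ = 1 := by
    ext i i'
    have key : ∑ x, a i x * (starRingEnd ℂ) (a i' x) = if i = i' then 1 else 0 := by
      calc ∑ x, a i x * (starRingEnd ℂ) (a i' x)
          = (starRingEnd ℂ) (∑ x, (starRingEnd ℂ) (a i x) * a i' x) := by
            simp [map_sum, mul_comm]
        _ = (starRingEnd ℂ) (if i = i' then 1 else 0) := by rw [← cinner, ha]
        _ = if i = i' then 1 else 0 := by split_ifs <;> simp
    simpa [Matrix.mul_apply, Matrix.conjTranspose_apply, hA, Matrix.one_apply] using key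
  have h2 : Aᴴ * A = 1 := mul_eq_one_comm.mp h1
  have h3 := congrFun (congrFun h2 l) k
  simp only [Matrix.mul_apply, Matrix.conjTranspose_apply, hA, Matrix.one_apply,
    Matrix.of_apply] at h3
  rw [show (if k = l then (1:ℂ) else 0) = if l = k then 1 else 0 by simp [eq_comm]]
  rw [← h3]
  exact Finset.sum_congr rfl fun i _ => mul_comm _ _

lemma parseval (d : ℕ) (a : Fin d → (Fin d → ℂ))
    (ha : ∀ i i' : Fin d, cinner d (a i) (a i') = if i = i' then 1 else 0)
    (v w : Fin d → ℂ) :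
    ∑ i, (starRingEnd ℂ) (cinner d (a i) v) * cinner d (a i) w = cinner d v w := by
  classical
  have : ∀ i : Fin d, (starRingEnd ℂ) (cinner d (a i) v) * cinner d (a i) w
      = ∑ k, ∑ l, ((starRingEnd ℂ) (v k) * w l) * (a i k * (starRingEnd ℂ) (a i l)) := by
    intro i
    rw [cinner, cinner, map_sum, Finset.sum_mul_sum]
    congr 1; ext k; congr 1; ext l
    simp [mul_comm, mul_left_comm, mul_assoc]
  rw [Finset.sum_congr rfl fun i _ => this i]
  rw [Finset.sum_comm]
  have : ∀ k : Fin d, (∑ i, ∑ l, ((starRingEnd ℂ) (v k) * w l) * (a i k * (starRingEnd ℂ) (a i l)))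
      = (starRingEnd ℂ) (v k) * w k := by
    intro k
    rw [Finset.sum_comm]
    have : ∀ l : Fin d, (∑ i, ((starRingEnd ℂ) (v k) * w l) * (a i k * (starRingEnd ℂ) (a i l)))
        = ((starRingEnd ℂ) (v k) * w l) * (if k = l then 1 else 0) := by
      intro l
      rw [← Finset.mul_sum, col_orth d a ha k l]
    rw [Finset.sum_congr rfl fun l _ => this l]
    simp
  rw [Finset.sum_congr rfl fun k _ => this k]
  rfl
/-- Cauchy–Schwarz core of Theorem 5: if `{a_i}` is an orthonormal basis of `ℂ^d`,
`{b_j}_{j<n_B}` is an orthonormal family with `⟨a_i, b_j⟩ = 1/√d` for all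
`i < n_A` and all `j`, and `n_B ≥ 2`, then `n_A ≤ d − n_A`. -/
theorem mub_block_bound (d nA nB : ℕ) (hd : 2 ≤ d) (hnA : nA ≤ d)
    (a : Fin d → (Fin d → ℂ)) (b : Fin nB → (Fin d → ℂ))
    (ha : ∀ i i' : Fin d, cinner d (a i) (a i') = if i = i' then 1 else 0)
    (hb : ∀ j j' : Fin nB, cinner d (b j) (b j') = if j = j' then 1 else 0)
    (hab : ∀ (i : Fin d) (j : Fin nB), (i : ℕ) < nA →
      cinner d (a i) (b j) = (1 / Real.sqrt d : ℝ))
    (hnB : 2 ≤ nB) :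
    nA ≤ d - nA := by
  classical
  have hd0 : (0:ℝ) < d := by exact_mod_cast (by omega : 0 < d)
  set j : Fin nB := ⟨0, by omega⟩ with hj
  set j' : Fin nB := ⟨1, by omega⟩ with hj'
  have hjj : j ≠ j' := by simp [hj, hj', Fin.ext_iff]
  set c : Fin d → ℂ := fun i => cinner d (a i) (b j) with hc
  set c' : Fin d → ℂ := fun i => cinner d (a i) (b j') with hc'
  have key : ∀ z : ℂ, (starRingEnd ℂ) z * z = ((‖z‖^2 : ℝ) : ℂ) := fun z => by
    rw [mul_comm, Complex.mul_conj']; norm_cast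
  have hsum0 : ∑ i, (starRingEnd ℂ) (c i) * c' i = 0 := by
    rw [hc, hc', parseval d a ha, hb]; simp [hjj]
  have hP : ∑ i, ‖c i‖^2 = (1:ℝ) := by
    have h : ∑ i, (starRingEnd ℂ) (c i) * c i = 1 := by
      have h0 := parseval d a ha (b j) (b j)
      rw [hb, if_pos rfl] at h0; exact h0
    rw [Finset.sum_congr rfl fun i _ => key (c i)] at h
    exact_mod_cast h
  have hP' : ∑ i, ‖c' i‖^2 = (1:ℝ) := by
    have h : ∑ i, (starRingEnd ℂ) (c' i) * c' i = 1 := by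
      have h0 := parseval d a ha (b j') (b j')
      rw [hb, if_pos rfl] at h0; exact h0
    rw [Finset.sum_congr rfl fun i _ => key (c' i)] at h
    exact_mod_cast h
  set S : Finset (Fin d) := Finset.univ.filter (fun i : Fin d => (i:ℕ) < nA) with hS
  have hcard : S.card = nA := by
    have h1 : S.card = ((Finset.range d).filter (fun k => k < nA)).card := by
      rw [Finset.card_filter, Finset.card_filter,
        Fin.sum_univ_eq_sum_range (fun k => if k < nA then (1:ℕ) else 0)]
    have h2 : (Finset.range d).filter (fun k => k < nA) = Finset.range nA := by
      ext k; simp only [Finset.mem_filter, Finset.mem_range]; omega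
    rw [h1, h2, Finset.card_range]
  have hval : ∀ i ∈ S, c i = ((1 / Real.sqrt d : ℝ) : ℂ) ∧ c' i = ((1 / Real.sqrt d : ℝ) : ℂ) := by
    intro i hi
    have hi' : (i:ℕ) < nA := by simpa [hS] using hi
    exact ⟨hab i j hi', hab i j' hi'⟩
  have hsq : (1 / Real.sqrt d : ℝ)^2 = 1/d := by
    rw [div_pow, one_pow, Real.sq_sqrt hd0.le]
  have hheadc : ∑ i ∈ S, ‖c i‖^2 = (nA:ℝ) * (1/d) := by
    rw [Finset.sum_congr rfl (fun i hi => show ‖c i‖^2 = 1/d by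
      rw [(hval i hi).1, Complex.norm_real, Real.norm_eq_abs, _root_.sq_abs, hsq])]
    rw [Finset.sum_const, hcard, nsmul_eq_mul]
  have hheadc' : ∑ i ∈ S, ‖c' i‖^2 = (nA:ℝ) * (1/d) := by
    rw [Finset.sum_congr rfl (fun i hi => show ‖c' i‖^2 = 1/d by
      rw [(hval i hi).2, Complex.norm_real, Real.norm_eq_abs, _root_.sq_abs, hsq])]
    rw [Finset.sum_const, hcard, nsmul_eq_mul]
  have hhead : ∑ i ∈ S, (starRingEnd ℂ) (c i) * c' i = (((nA:ℝ) * (1/d) : ℝ) : ℂ) := by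
    rw [Finset.sum_congr rfl (fun i hi => show (starRingEnd ℂ) (c i) * c' i = ((1/d : ℝ):ℂ) by
      rw [(hval i hi).1, (hval i hi).2, Complex.conj_ofReal, ← Complex.ofReal_mul,
        ← sq, hsq])]
    rw [Finset.sum_const, hcard, nsmul_eq_mul]
    push_cast; ring
  have htail0 : ∑ i ∈ Sᶜ, (starRingEnd ℂ) (c i) * c' i = -(((nA:ℝ) * (1/d) : ℝ) : ℂ) := by
    have h := Finset.sum_add_sum_compl S (fun i => (starRingEnd ℂ) (c i) * c' i)
    rw [hsum0, hhead] at h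
    linear_combination h
  have htnn : (0:ℝ) ≤ (nA:ℝ) * (1/d) := by positivity
  have hnorm : ‖∑ i ∈ Sᶜ, (starRingEnd ℂ) (c i) * c' i‖ = (nA:ℝ) * (1/d) := by
    rw [htail0, norm_neg, Complex.norm_real, Real.norm_eq_abs, _root_.abs_of_nonneg htnn]
  have htailc : ∑ i ∈ Sᶜ, ‖c i‖^2 = 1 - (nA:ℝ) * (1/d) := by
    have h := Finset.sum_add_sum_compl S (fun i => ‖c i‖^2)
    rw [hP, hheadc] at h; linarith
  have htailc' : ∑ i ∈ Sᶜ, ‖c' i‖^2 = 1 - (nA:ℝ) * (1/d) := by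
    have h := Finset.sum_add_sum_compl S (fun i => ‖c' i‖^2)
    rw [hP', hheadc'] at h; linarith
  have hCS1 : ‖∑ i ∈ Sᶜ, (starRingEnd ℂ) (c i) * c' i‖ ≤ ∑ i ∈ Sᶜ, ‖c i‖ * ‖c' i‖ := by
    refine (norm_sum_le _ _).trans_eq (Finset.sum_congr rfl fun i _ => ?_)
    rw [norm_mul, RCLike.norm_conj]
  have hCS2 : (∑ i ∈ Sᶜ, ‖c i‖ * ‖c' i‖)^2
      ≤ (∑ i ∈ Sᶜ, ‖c i‖^2) * (∑ i ∈ Sᶜ, ‖c' i‖^2) :=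
    Finset.sum_mul_sq_le_sq_mul_sq _ _ _
  have hXnn : (0:ℝ) ≤ ∑ i ∈ Sᶜ, ‖c i‖ * ‖c' i‖ :=
    Finset.sum_nonneg fun i _ => mul_nonneg (norm_nonneg _) (norm_nonneg _)
  have htb : (0:ℝ) ≤ 1 - (nA:ℝ) * (1/d) := by
    rw [← htailc]; exact Finset.sum_nonneg fun i _ => sq_nonneg _
  rw [htailc, htailc'] at hCS2
  rw [hnorm] at hCS1
  have hfin : 2 * (nA:ℝ) ≤ d := by
    have h1 : (nA:ℝ) * (1/d) ≤ 1 - (nA:ℝ) * (1/d) := by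
      nlinarith [sq_nonneg ((∑ i ∈ Sᶜ, ‖c i‖ * ‖c' i‖) - (1 - (nA:ℝ) * (1/d)))]
    have h2 : (nA:ℝ) * (1/d) * d ≤ (1 - (nA:ℝ) * (1/d)) * d := by nlinarith
    field_simp at h2
    linarith
  have : 2 * nA ≤ d := by exact_mod_cast hfin
  omega
end

section
/- Let d ≥ 2, m a divisor of d with m ≠ d, and n a positive multiple of m with n/m < n_B ≤ d/m. Then there exists a nonzero vector ψ ∈ C^d with exactly d − n nonzero standard-basis coordinates and exactly n_B nonzero Fourier coefficients. -/
open Complex Finset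
open scoped Classical

section AuxUDP
open Polynomial Finset


noncomputable def Pz (ζ : ℂ) (t : ℕ) : Polynomial ℂ := ∏ r ∈ Finset.range t, (X - C (ζ^r))

lemma Pz_ne_zero (ζ : ℂ) (t : ℕ) : Pz ζ t ≠ 0 :=
  (monic_prod_of_monic _ _ fun r _ => monic_X_sub_C _ : (Pz ζ t).Monic).ne_zero

lemma Pz_eval_root (ζ : ℂ) {t r : ℕ} (hr : r < t) : (Pz ζ t).eval (ζ^r) = 0 := by
  rw [Pz, eval_prod]
  exact Finset.prod_eq_zero (Finset.mem_range.2 hr) (by simp)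

lemma Pz_eval_ne {ζ : ℂ} {k t r : ℕ} (hζ : IsPrimitiveRoot ζ k) (htr : t ≤ r) (hrk : r < k) :
    (Pz ζ t).eval (ζ^r) ≠ 0 := by
  rw [Pz, eval_prod]
  refine Finset.prod_ne_zero_iff.2 fun i hi => ?_
  rw [Finset.mem_range] at hi
  simp only [eval_sub, eval_X, eval_C, sub_ne_zero]
  intro h
  have := hζ.pow_inj hrk (lt_of_lt_of_le hi (le_trans htr hrk.le)) h
  omega



lemma Pz_identity {ζ : ℂ} {k : ℕ} (hk : 0 < k) (hk1 : ζ ^ k = 1) {t : ℕ} (ht : 0 < t) :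
    (X - C (ζ^(t-1))) * (Pz ζ t).comp (C ζ * X)
      = C (ζ^t) * ((X - C (ζ^(k-1))) * Pz ζ t) := by
  obtain ⟨t', rfl⟩ : ∃ t', t = t' + 1 := ⟨t - 1, by omega⟩
  have hkk : ζ * ζ^(k-1) = 1 := by
    rw [← pow_succ']
    rwa [show k - 1 + 1 = k by omega]
  have hfac : ∀ r : ℕ, (X - C (ζ^r)).comp (C ζ * X)
      = C ζ * (X - C (ζ^r * ζ^(k-1))) := by
    intro r
    rw [sub_comp, X_comp, C_comp, mul_sub, ← C_mul]
    congr 2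
    calc ζ^r = (ζ * ζ^(k-1)) * ζ^r := by rw [hkk, one_mul]
      _ = ζ * (ζ^r * ζ^(k-1)) := by ring
  have hcomp : (Pz ζ (t'+1)).comp (C ζ * X)
      = C (ζ^(t'+1)) * (Pz ζ t' * (X - C (ζ^(k-1)))) := by
    rw [Pz, Polynomial.prod_comp]
    calc (∏ r ∈ Finset.range (t'+1), (X - C (ζ^r)).comp (C ζ * X))
        = ∏ r ∈ Finset.range (t'+1), C ζ * (X - C (ζ^r * ζ^(k-1))) := by
          exact Finset.prod_congr rfl fun r _ => hfac r
      _ = (∏ _r ∈ Finset.range (t'+1), C ζ) * ∏ r ∈ Finset.range (t'+1), (X - C (ζ^r * ζ^(k-1))) := by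
          rw [Finset.prod_mul_distrib]
      _ = C (ζ^(t'+1)) * ∏ r ∈ Finset.range (t'+1), (X - C (ζ^r * ζ^(k-1))) := by
          rw [Finset.prod_const, Finset.card_range, ← C_pow]
      _ = C (ζ^(t'+1)) * (Pz ζ t' * (X - C (ζ^(k-1)))) := by
          congr 1
          rw [Finset.prod_range_succ']
          congr 1
          · rw [Pz]
            refine Finset.prod_congr rfl fun r _ => ?_
            congr 2
            calc ζ^(r+1) * ζ^(k-1) = (ζ * ζ^(k-1)) * ζ^r := by ring
              _ = ζ^r := by rw [hkk, one_mul]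
          · rw [pow_zero, one_mul]
  rw [hcomp, show Pz ζ (t'+1) = Pz ζ t' * (X - C (ζ^(t'))) by rw [Pz, Pz, Finset.prod_range_succ]]
  simp only [Nat.add_sub_cancel]
  ring

lemma coeff_comp_C_mul_X (p : Polynomial ℂ) (s : ℂ) (j : ℕ) :
    (p.comp (C s * X)).coeff j = s^j * p.coeff j := by
  induction p using Polynomial.induction_on' with
  | add p q hp hq => simp [add_comp, hp, hq, mul_add]
  | monomial i a =>
    rw [monomial_comp, mul_pow, ← C_pow,
      show C a * (C (s^i) * X^i) = C (a * s^i) * X^i by rw [C_mul]; ring, coeff_C_mul, coeff_X_pow,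
      coeff_monomial]
    by_cases h : i = j
    · subst h; simp [mul_comm]
    · simp [h, Ne.symm h]

lemma X_sub_C_mul_coeff (c : ℂ) (p : Polynomial ℂ) (j : ℕ) :
    ((X - C c) * p).coeff (j+1) = p.coeff j - c * p.coeff (j+1) := by
  rw [sub_mul, coeff_sub, coeff_X_mul, coeff_C_mul]

lemma Pz_monic (ζ : ℂ) (t : ℕ) : (Pz ζ t).Monic :=
  monic_prod_of_monic _ _ fun r _ => monic_X_sub_C _

lemma Pz_natDegree (ζ : ℂ) (t : ℕ) : (Pz ζ t).natDegree = t := by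
  rw [Pz, natDegree_prod_of_monic _ _ fun r _ => monic_X_sub_C _]
  simp only [natDegree_X_sub_C, Finset.sum_const, smul_eq_mul, mul_one, Finset.card_range]

lemma Pz_coeff_ne_zero {ζ : ℂ} {k : ℕ} (hζ : IsPrimitiveRoot ζ k) {t : ℕ} (htk : t < k)
    {j : ℕ} (hj : j ≤ t) : (Pz ζ t).coeff j ≠ 0 := by
  have hk : 0 < k := lt_of_le_of_lt (Nat.zero_le t) htk
  have hζ0 : ζ ≠ 0 := hζ.ne_zero hk.ne'
  -- descending induction: coeff (t - i) ≠ 0 for all i ≤ t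
  have key : ∀ i, i ≤ t → (Pz ζ t).coeff (t - i) ≠ 0 := by
    intro i
    induction i with
    | zero =>
      intro _
      have := (Pz_monic ζ t).coeff_natDegree
      rw [Pz_natDegree] at this
      rw [Nat.sub_zero, this]
      exact one_ne_zero
    | succ i ih =>
      intro hit
      have ht : 0 < t := by omega
      set p := Pz ζ t with hp
      set jj := t - (i+1) with hjj
      have hjj1 : jj + 1 = t - i := by omega
      have hid := Pz_identity hk (hζ.pow_eq_one) ht
      have hc := congrArg (fun q => Polynomial.coeff q (jj+1)) hid
      rw [X_sub_C_mul_coeff, coeff_C_mul, X_sub_C_mul_coeff,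
        coeff_comp_C_mul_X, coeff_comp_C_mul_X] at hc
      -- hc : ζ^jj * p.coeff jj - ζ^(t-1) * (ζ^(jj+1) * p.coeff (jj+1))
      --      = ζ^t * (p.coeff jj - ζ^(k-1) * p.coeff (jj+1))
      have hne1 : ζ^jj - ζ^t ≠ 0 := by
        rw [sub_ne_zero]
        intro h
        have := hζ.pow_inj (by omega : jj < k) htk h
        omega
      have hne2 : ζ^jj - ζ^(k-1) ≠ 0 := by
        rw [sub_ne_zero]
        intro h
        have := hζ.pow_inj (by omega : jj < k) (by omega : k-1 < k) h
        omega
      have hcoef : p.coeff jj * (ζ^jj - ζ^t) = p.coeff (jj+1) * (ζ^(t-1) * ζ^(jj+1) - ζ^t * ζ^(k-1)) := by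
        linear_combination hc
      have hpow : ζ^(t-1) * ζ^(jj+1) - ζ^t * ζ^(k-1) = ζ^t * (ζ^jj - ζ^(k-1)) := by
        have h1 : ζ^(t-1) * ζ^(jj+1) = ζ^t * ζ^jj := by
          rw [← pow_add, ← pow_add]
          congr 1
          omega
        rw [h1, mul_sub]
      rw [hpow] at hcoef
      have hnz : p.coeff (jj+1) ≠ 0 := by
        rw [hjj1]; exact ih (by omega)
      intro h0
      rw [h0, zero_mul] at hcoef
      exact (mul_ne_zero hnz (mul_ne_zero (pow_ne_zero _ hζ0) hne2)) hcoef.symm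
  have := key (t - j) (Nat.sub_le _ _)
  rwa [Nat.sub_sub_self hj] at this

noncomputable def Qe (ε : ℂ) (q : ℕ) : Polynomial ℂ := ∑ s ∈ Finset.range (q+1), C (ε^(s*s)) * X^s

lemma Qe_coeff (ε : ℂ) (q s : ℕ) : (Qe ε q).coeff s = if s ≤ q then ε^(s*s) else 0 := by
  rw [Qe, finset_sum_coeff]
  simp only [coeff_C_mul, coeff_X_pow]
  by_cases h : s ≤ q
  · rw [Finset.sum_eq_single s]
    · simp [h]
    · intro b _ hb; simp [Ne.symm hb]
    · intro hs
      exact absurd (Finset.mem_range.2 (by omega)) hs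
  · rw [if_neg h]
    refine Finset.sum_eq_zero fun b hb => ?_
    rw [Finset.mem_range] at hb
    have : ¬ (s = b) := by omega
    simp [this]

lemma Qe_natDegree_le (ε : ℂ) (q : ℕ) : (Qe ε q).natDegree ≤ q := by
  refine natDegree_sum_le_of_forall_le _ _ fun s hs => ?_
  rw [Finset.mem_range] at hs
  exact le_trans (natDegree_C_mul_le _ _) (by rw [natDegree_X_pow]; omega)

lemma Qe_eval (ε x : ℂ) (q : ℕ) : (Qe ε q).eval x = ∑ s ∈ Finset.range (q+1), ε^(s*s) * x^s := by
  rw [Qe, eval_finset_sum]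
  simp

lemma mul_self_inj' {a b : ℕ} (h : a * a = b * b) : a = b := Nat.mul_self_inj.mp h

lemma exists_eps {ζ : ℂ} {k t q : ℕ} (hζ : IsPrimitiveRoot ζ k) (htk : t < k)
    (htq : t + q ≤ k - 1) :
    ∃ ε : ℂ, (∀ j, j ≤ t + q → (Pz ζ t * Qe ε q).coeff j ≠ 0) ∧
      (∀ r, r < k → (Qe ε q).eval (ζ^r) ≠ 0) := by
  classical
  set G : ℕ → Polynomial ℂ := fun j =>
    ∑ s ∈ (Finset.range (q+1)).filter (· ≤ j), C ((Pz ζ t).coeff (j - s)) * X^(s*s) with hG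
  set H : ℕ → Polynomial ℂ := fun r =>
    ∑ s ∈ Finset.range (q+1), C ((ζ^r)^s) * X^(s*s) with hH
  have hGeval : ∀ (ε : ℂ) (j : ℕ), (Pz ζ t * Qe ε q).coeff j = (G j).eval ε := by
    intro ε j
    rw [mul_comm, Polynomial.coeff_mul, Finset.Nat.sum_antidiagonal_eq_sum_range_succ_mk]
    simp only [Qe_coeff, ite_mul, zero_mul]
    rw [← Finset.sum_filter]
    have hset : (Finset.range (j+1)).filter (fun s => s ≤ q)
        = (Finset.range (q+1)).filter (· ≤ j) := by
      ext s
      simp only [Finset.mem_filter, Finset.mem_range]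
      omega
    rw [hset, hG]
    simp only [eval_finset_sum, eval_mul, eval_C, eval_pow, eval_X]
    exact Finset.sum_congr rfl fun s _ => mul_comm _ _
  have hGne : ∀ j, j ≤ t + q → G j ≠ 0 := by
    intro j hj
    set s₀ := min j q with hs₀
    have hmem : s₀ ∈ (Finset.range (q+1)).filter (· ≤ j) := by
      simp only [Finset.mem_filter, Finset.mem_range]
      omega
    have hco : (G j).coeff (s₀ * s₀) = (Pz ζ t).coeff (j - s₀) := by
      rw [hG]
      simp only [finset_sum_coeff, coeff_C_mul, coeff_X_pow]
      rw [Finset.sum_eq_single s₀]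
      · simp
      · intro b _ hb
        have : ¬ (s₀ * s₀ = b * b) := fun h => hb (mul_self_inj' h.symm)
        simp [this]
      · intro h; exact absurd hmem h
    have hPne : (Pz ζ t).coeff (j - s₀) ≠ 0 :=
      Pz_coeff_ne_zero hζ htk (by omega)
    intro h0
    rw [h0, coeff_zero] at hco
    exact hPne hco.symm
  have hHeval : ∀ (ε : ℂ) (r : ℕ), (Qe ε q).eval (ζ^r) = (H r).eval ε := by
    intro ε r
    rw [Qe_eval, hH]
    simp only [eval_finset_sum, eval_mul, eval_C, eval_pow, eval_X]
    exact Finset.sum_congr rfl fun s _ => mul_comm _ _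
  have hHne : ∀ r, H r ≠ 0 := by
    intro r
    have hco : (H r).coeff 0 = 1 := by
      rw [hH]
      simp only [finset_sum_coeff, coeff_C_mul, coeff_X_pow]
      rw [Finset.sum_eq_single 0]
      · simp
      · intro b _ hb
        have : ¬ ((0:ℕ) = b * b) := by
          intro h
          exact hb (by nlinarith : b = 0)
        simp [this]
      · intro h; simp at h
    intro h0
    rw [h0, coeff_zero] at hco
    exact one_ne_zero hco.symm
  set bad : Finset ℂ :=
    ((Finset.range (t+q+1)).biUnion fun j => (G j).roots.toFinset) ∪
      ((Finset.range k).biUnion fun r => (H r).roots.toFinset) with hbad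
  obtain ⟨ε, hε⟩ := Infinite.exists_notMem_finset bad
  refine ⟨ε, fun j hj h0 => ?_, fun r hr h0 => ?_⟩
  · rw [hGeval] at h0
    apply hε
    rw [hbad, Finset.mem_union]
    left
    rw [Finset.mem_biUnion]
    exact ⟨j, Finset.mem_range.2 (by omega), Multiset.mem_toFinset.2
      ((Polynomial.mem_roots (hGne j hj)).2 h0)⟩
  · rw [hHeval] at h0
    apply hε
    rw [hbad, Finset.mem_union]
    right
    rw [Finset.mem_biUnion]
    exact ⟨r, Finset.mem_range.2 hr, Multiset.mem_toFinset.2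
      ((Polynomial.mem_roots (hHne r)).2 h0)⟩

lemma geom_sum_root (u : ℂ) (d : ℕ) (hu : u ^ d = 1) :
    ∑ i ∈ Finset.range d, u ^ i = if u = 1 then (d:ℂ) else 0 := by
  by_cases h : u = 1
  · simp [h]
  · rw [if_neg h, geom_sum_eq h, hu, sub_self, zero_div]

lemma conj_dftOmega (d : ℕ) : (starRingEnd ℂ) (dftOmega d) = (dftOmega d)⁻¹ := by
  rw [dftOmega, ← Complex.exp_conj, ← Complex.exp_neg]
  congr 1
  rw [map_div₀]
  simp [Complex.conj_I, map_ofNat]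
  ring

lemma count_mod (m k : ℕ) (P : ℕ → Prop) [DecidablePred P] :
    ((Finset.range (m*k)).filter fun i => P (i % k)).card
      = m * ((Finset.range k).filter P).card := by
  induction m with
  | zero => simp
  | succ m ih =>
    rw [show (m+1)*k = m*k + k by ring, Finset.range_add, Finset.filter_union,
      Finset.card_union_of_disjoint, ih]
    · have : ((Finset.map (addLeftEmbedding (m*k)) (Finset.range k)).filter
          fun i => P (i % k)).card = ((Finset.range k).filter P).card := by
        rw [Finset.filter_map, Finset.card_map]
        congr 1
        refine Finset.filter_congr fun x hx => ?_
        rw [Finset.mem_range] at hx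
        have : (m * k + x) % k = x := by
          rw [Nat.add_comm, Nat.add_mul_mod_self_right, Nat.mod_eq_of_lt hx]
        simp [addLeftEmbedding, this]
      rw [this]; ring
    · refine Finset.disjoint_left.2 fun a ha hb => ?_
      rw [Finset.mem_filter, Finset.mem_range] at ha
      rw [Finset.mem_filter, Finset.mem_map] at hb
      obtain ⟨⟨x, hx, hxa⟩, -⟩ := hb
      have : m * k + x = a := hxa
      omega

lemma dftCoeff_eval (d m k : ℕ) (hdk : d = m * k) (hm : 0 < m) (hk : 0 < k)
    (R : Polynomial ℂ) (hdeg : R.natDegree < k) (j : Fin d) :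
    dftCoeff d (fun i => R.eval ((dftOmega d ^ m) ^ (i : ℕ))) j
      = if m ∣ (j:ℕ) then ((d:ℂ) / (Real.sqrt d : ℂ)) * R.coeff ((j:ℕ)/m) else 0 := by
  have hd0 : d ≠ 0 := by rw [hdk]; positivity
  set ω := dftOmega d with hω_def
  have hω : IsPrimitiveRoot ω d := Complex.isPrimitiveRoot_exp d hd0
  have hωne : ω ≠ 0 := Complex.exp_ne_zero _
  have hωd : ω ^ d = 1 := hω.pow_eq_one
  have hjd : (j:ℕ) < d := j.isLt
  calc dftCoeff d (fun i => R.eval ((ω ^ m) ^ (i : ℕ))) j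
      = ∑ i ∈ Finset.range d,
          (starRingEnd ℂ) (ω ^ (i * (j:ℕ)) / (Real.sqrt d : ℂ)) * R.eval ((ω^m)^i) := by
        rw [dftCoeff]
        simp only [fourierVec]
        exact Fin.sum_univ_eq_sum_range
          (fun i => (starRingEnd ℂ) (ω ^ (i * (j:ℕ)) / (Real.sqrt d : ℂ)) * R.eval ((ω^m)^i)) d
    _ = ∑ i ∈ Finset.range d, ∑ s ∈ Finset.range k,
          (R.coeff s / (Real.sqrt d : ℂ)) * ((ω^(m*s) * (ω^(j:ℕ))⁻¹)^i) := by
        refine Finset.sum_congr rfl fun i _ => ?_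
        rw [eval_eq_sum_range' hdeg, Finset.mul_sum]
        refine Finset.sum_congr rfl fun s _ => ?_
        rw [map_div₀, Complex.conj_ofReal, map_pow, conj_dftOmega]
        have e1 : (ω⁻¹) ^ (i * (j:ℕ)) = (ω ^ (i * (j:ℕ)))⁻¹ := inv_pow ω _
        have e2 : ((ω^m)^i)^s = ω ^ (m*s*i) := by
          rw [← pow_mul, ← pow_mul]
          congr 1
          ring
        have e3 : (ω^(m*s))^i = ω ^ (m*s*i) := by rw [← pow_mul]
        have e4 : ((ω^(j:ℕ))⁻¹)^i = (ω ^ (i * (j:ℕ)))⁻¹ := by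
          rw [inv_pow, ← pow_mul, mul_comm (j:ℕ) i]
        rw [mul_pow, e1, e2, e3, e4]
        ring
    _ = ∑ s ∈ Finset.range k,
          (R.coeff s / (Real.sqrt d : ℂ)) * ∑ i ∈ Finset.range d, (ω^(m*s) * (ω^(j:ℕ))⁻¹)^i := by
        rw [Finset.sum_comm]
        exact Finset.sum_congr rfl fun s _ => by rw [Finset.mul_sum]
    _ = ∑ s ∈ Finset.range k, if m * s = (j:ℕ) then (R.coeff s / (Real.sqrt d : ℂ)) * d else 0 := by
        refine Finset.sum_congr rfl fun s hs => ?_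
        rw [Finset.mem_range] at hs
        have hu : (ω^(m*s) * (ω^(j:ℕ))⁻¹) ^ d = 1 := by
          rw [mul_pow, ← pow_mul, mul_comm (m*s) d, pow_mul, hωd, one_pow, inv_pow, ← pow_mul,
            mul_comm (j:ℕ) d, pow_mul, hωd, one_pow, inv_one, mul_one]
        rw [geom_sum_root _ d hu]
        have hcond : (ω^(m*s) * (ω^(j:ℕ))⁻¹ = 1) ↔ (m * s = (j:ℕ)) := by
          rw [mul_inv_eq_one₀ (pow_ne_zero _ hωne)]
          constructor
          · intro h
            exact hω.pow_inj (by rw [hdk]; exact mul_lt_mul_of_pos_left hs hm) hjd h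
          · intro h; rw [h]
        by_cases h : m * s = (j:ℕ)
        · rw [if_pos (hcond.2 h), if_pos h]
        · rw [if_neg (fun hh => h (hcond.1 hh)), if_neg h, mul_zero]
    _ = if m ∣ (j:ℕ) then ((d:ℂ) / (Real.sqrt d : ℂ)) * R.coeff ((j:ℕ)/m) else 0 := by
        by_cases hdvd : m ∣ (j:ℕ)
        · obtain ⟨s₀, hs₀⟩ := hdvd
          have hs₀k : s₀ < k := by
            by_contra h
            push_neg at h
            have : m * k ≤ m * s₀ := Nat.mul_le_mul_left m h
            omega
          rw [Finset.sum_eq_single s₀]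
          · rw [if_pos (by omega), if_pos ⟨s₀, hs₀⟩]
            rw [show (j:ℕ)/m = s₀ by rw [hs₀]; exact Nat.mul_div_cancel_left s₀ hm]
            ring
          · intro b _ hb
            rw [if_neg]
            intro h
            apply hb
            have := h.trans hs₀
            exact Nat.eq_of_mul_eq_mul_left hm (by omega)
          · intro h
            exact absurd (Finset.mem_range.2 hs₀k) h
        · rw [if_neg hdvd]
          refine Finset.sum_eq_zero fun s _ => ?_
          rw [if_neg (fun h => hdvd ⟨s, h.symm⟩)]

end AuxUDP

/-- Theorem 1: if `m ∣ d`, `m ≠ d`, `n` is a positive multiple of `m` and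
`n/m < n_B ≤ d/m`, then there is a nonzero `ψ ∈ ℂ^d` with exactly `d − n`
nonzero standard-basis coordinates and exactly `n_B` nonzero Fourier coefficients. -/

theorem uncertainty_diagram_point_exists (d m n nB' : ℕ) (hd : 2 ≤ d)
    (hm : m ∣ d) (hmd : m ≠ d) (hn : 0 < n) (hmn : m ∣ n)
    (h1 : n / m < nB') (h2 : nB' ≤ d / m) :
    ∃ ψ : Fin d → ℂ, ψ ≠ 0 ∧ nA d ψ = d - n ∧ nB d ψ = nB' := by
  classical
  have hm0 : 0 < m := by
    rcases Nat.eq_zero_or_pos m with h | h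
    · subst h
      have := Nat.eq_zero_of_zero_dvd hm
      omega
    · exact h
  set k := d / m with hk_def
  have hdk : d = m * k := (Nat.mul_div_cancel' hm).symm
  set t := n / m with ht_def
  have hnt : n = m * t := (Nat.mul_div_cancel' hmn).symm
  have ht0 : 0 < t := by
    rcases Nat.eq_zero_or_pos t with h | h
    · rw [h, mul_zero] at hnt; omega
    · exact h
  have htk : t < k := lt_of_lt_of_le h1 h2
  set q := nB' - 1 - t with hq_def
  have htq : t + q = nB' - 1 := by omega
  have hk0 : 0 < k := by omega
  have hd0 : d ≠ 0 := by omega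
  set ω := dftOmega d with hω_def
  have hω : IsPrimitiveRoot ω d := Complex.isPrimitiveRoot_exp d hd0
  set ζ := ω ^ m with hζ_def
  have hζ : IsPrimitiveRoot ζ k := hω.pow (by omega) hdk
  obtain ⟨ε, hC1, hC2⟩ := exists_eps hζ htk (show t + q ≤ k - 1 by omega)
  set R := Pz ζ t * Qe ε q with hR_def
  have hRdeg : R.natDegree ≤ t + q := by
    refine le_trans Polynomial.natDegree_mul_le ?_
    rw [Pz_natDegree]
    exact Nat.add_le_add_left (Qe_natDegree_le ε q) t
  have hRdegk : R.natDegree < k := by omega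
  have hRcoeff : ∀ s : ℕ, (R.coeff s ≠ 0 ↔ s ≤ t + q) := by
    intro s
    constructor
    · intro hne
      by_contra hgt
      exact hne (Polynomial.coeff_eq_zero_of_natDegree_lt (by omega))
    · exact hC1 s
  set ψ : Fin d → ℂ := fun i => R.eval (ζ ^ (i : ℕ)) with hψ_def
  have hζk : ζ ^ k = 1 := hζ.pow_eq_one
  have hpowmod : ∀ i : ℕ, ζ ^ i = ζ ^ (i % k) := by
    intro i
    conv_lhs => rw [← Nat.div_add_mod i k]
    rw [pow_add, pow_mul, hζk, one_pow, one_mul]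
  have heval : ∀ r : ℕ, r < k → (R.eval (ζ ^ r) ≠ 0 ↔ t ≤ r) := by
    intro r hr
    rw [hR_def, Polynomial.eval_mul]
    constructor
    · intro hne
      by_contra hlt
      push_neg at hlt
      rw [Pz_eval_root ζ hlt, zero_mul] at hne
      exact hne rfl
    · intro htr
      exact mul_ne_zero (Pz_eval_ne hζ htr hr) (hC2 r hr)
  have hψiff : ∀ i : ℕ, (R.eval (ζ ^ i) ≠ 0 ↔ t ≤ i % k) := by
    intro i
    rw [hpowmod i]
    exact heval (i % k) (Nat.mod_lt i hk0)
  -- nA computation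
  have hnA : nA d ψ = m * (k - t) := by
    rw [nA]
    calc (Finset.univ.filter fun i : Fin d => ψ i ≠ 0).card
        = ∑ i : Fin d, if R.eval (ζ ^ (i:ℕ)) ≠ 0 then 1 else 0 := Finset.card_filter _ _
      _ = ∑ i ∈ Finset.range d, if R.eval (ζ ^ i) ≠ 0 then 1 else 0 :=
          Fin.sum_univ_eq_sum_range (fun i => if R.eval (ζ ^ i) ≠ 0 then 1 else 0) d
      _ = ∑ i ∈ Finset.range d, if t ≤ i % k then 1 else 0 := by
          refine Finset.sum_congr rfl fun i _ => ?_
          by_cases h : t ≤ i % k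
          · rw [if_pos ((hψiff i).2 h), if_pos h]
          · rw [if_neg (fun hh => h ((hψiff i).1 hh)), if_neg h]
      _ = ((Finset.range d).filter fun i => t ≤ i % k).card := (Finset.card_filter _ _).symm
      _ = m * ((Finset.range k).filter fun x => t ≤ x).card := by
          rw [hdk]; exact count_mod m k _
      _ = m * (k - t) := by
          congr 1
          rw [show (Finset.range k).filter (fun x => t ≤ x) = Finset.Ico t k from by
            ext x
            simp only [Finset.mem_filter, Finset.mem_range, Finset.mem_Ico]
            omega]
          exact Nat.card_Ico t k
  have hd_n : d - n = m * (k - t) := by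
    rw [hdk, hnt, Nat.mul_sub]
  -- nB computation
  have hsqrt_ne : ((d:ℂ) / (Real.sqrt d : ℂ)) ≠ 0 := by
    apply div_ne_zero
    · exact_mod_cast Nat.cast_ne_zero.2 hd0
    · rw [Complex.ofReal_ne_zero]
      have : (0:ℝ) < Real.sqrt d := Real.sqrt_pos.2 (by positivity)
      exact ne_of_gt this
  have hformula : ∀ j : Fin d, dftCoeff d ψ j
      = if m ∣ (j:ℕ) then ((d:ℂ) / (Real.sqrt d : ℂ)) * R.coeff ((j:ℕ)/m) else 0 :=
    fun j => dftCoeff_eval d m k hdk hm0 hk0 R hRdegk j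
  have hiff : ∀ j : Fin d, (dftCoeff d ψ j ≠ 0 ↔ (m ∣ (j:ℕ) ∧ (j:ℕ)/m < nB')) := by
    intro j
    rw [hformula j]
    by_cases hdvd : m ∣ (j:ℕ)
    · rw [if_pos hdvd]
      rw [mul_ne_zero_iff]
      constructor
      · rintro ⟨-, hco⟩
        exact ⟨hdvd, by have := (hRcoeff _).1 hco; omega⟩
      · rintro ⟨-, hlt⟩
        exact ⟨hsqrt_ne, (hRcoeff _).2 (by omega)⟩
    · rw [if_neg hdvd]
      simp [hdvd]
  have hnB : nB d ψ = nB' := by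
    rw [nB]
    calc (Finset.univ.filter fun j : Fin d => dftCoeff d ψ j ≠ 0).card
        = ∑ j : Fin d, if m ∣ (j:ℕ) ∧ (j:ℕ)/m < nB' then 1 else 0 := by
          rw [Finset.card_filter]
          refine Finset.sum_congr rfl fun j _ => ?_
          by_cases h : m ∣ (j:ℕ) ∧ (j:ℕ)/m < nB'
          · rw [if_pos ((hiff j).2 h), if_pos h]
          · rw [if_neg (fun hh => h ((hiff j).1 hh)), if_neg h]
      _ = ∑ j ∈ Finset.range d, if m ∣ j ∧ j/m < nB' then 1 else 0 :=
          Fin.sum_univ_eq_sum_range (fun j => if m ∣ j ∧ j/m < nB' then 1 else 0) d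
      _ = ((Finset.range d).filter fun j => m ∣ j ∧ j/m < nB').card := (Finset.card_filter _ _).symm
      _ = ((Finset.range nB').image (fun s => m * s)).card := by
          congr 1
          ext j
          simp only [Finset.mem_filter, Finset.mem_range, Finset.mem_image]
          constructor
          · rintro ⟨hjd, ⟨s, hs⟩, hlt⟩
            refine ⟨j / m, ?_, ?_⟩
            · exact hlt
            · rw [hs, Nat.mul_div_cancel_left s hm0]
          · rintro ⟨s, hs, rfl⟩
            have hsk : s < k := by omega
            refine ⟨by rw [hdk]; exact mul_lt_mul_of_pos_left hsk hm0, ⟨s, rfl⟩, ?_⟩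
            rw [Nat.mul_div_cancel_left s hm0]
            exact hs
      _ = nB' := by
          rw [Finset.card_image_of_injective _ fun a b h => Nat.eq_of_mul_eq_mul_left hm0 h,
            Finset.card_range]
  have htd : t < d := by
    have : k ≤ d := by rw [hdk]; exact Nat.le_mul_of_pos_left k hm0
    omega
  have hψne : ψ ≠ 0 := by
    intro h0
    have h1' : ψ ⟨t, htd⟩ ≠ 0 := by
      show R.eval (ζ ^ ((⟨t, htd⟩ : Fin d) : ℕ)) ≠ 0
      refine (hψiff t).2 ?_
      rw [Nat.mod_eq_of_lt htk]
    rw [h0] at h1'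
    exact h1' rfl
  exact ⟨ψ, hψne, by rw [hnA, hd_n], hnB⟩
end

section
/- Let d be a positive integer, n a divisor of d, k = d/n, and ψ the indicator vector of the subgroup nZ_d = {0, n, 2n, ...} ⊂ Z_d (normalized to a unit vector). Then the Kirkwood-Dirac distribution of ψ with respect to the standard basis and the Fourier basis is everywhere nonnegative; i.e., ψ is KD classical. -/
open Complex Finset
open scoped Classical

lemma dftOmega_prim {d : ℕ} (hd : 0 < d) : IsPrimitiveRoot (dftOmega d) d :=
  Complex.isPrimitiveRoot_exp d hd.ne'

lemma sum_multiples {d n k : ℕ} (hdk : d = n * k) (hn : 0 < n) (f : ℕ → ℂ) :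
    ∑ m : Fin d, (if n ∣ (m : ℕ) then f (m : ℕ) else 0)
      = ∑ t ∈ Finset.range k, f (n * t) := by
  classical
  rw [← Finset.sum_filter]
  refine Finset.sum_bij' (fun (m : Fin d) _ => (m : ℕ) / n)
    (fun (t : ℕ) ht => (⟨n * t, ?_⟩ : Fin d)) ?_ ?_ ?_ ?_ ?_
  · rw [hdk]
    exact (Nat.mul_lt_mul_left hn).mpr (Finset.mem_range.mp ht)
  · intro m hm
    simp only [Finset.mem_filter, Finset.mem_univ, true_and] at hm
    obtain ⟨t, hmt⟩ := hm
    show (m : ℕ) / n ∈ Finset.range k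
    rw [hmt, Nat.mul_div_cancel_left t hn]
    refine Finset.mem_range.mpr ?_
    have h2 : n * t < n * k := by rw [← hmt, ← hdk]; exact m.isLt
    exact lt_of_mul_lt_mul_left h2 (Nat.zero_le n)
  · intro t ht
    simp [Nat.dvd_mul_right]
  · intro m hm
    simp only [Finset.mem_filter, Finset.mem_univ, true_and] at hm
    obtain ⟨t, hmt⟩ := hm
    apply Fin.ext
    simp [hmt, Nat.mul_div_cancel_left t hn]
  · intro t ht
    simp [Nat.mul_div_cancel_left t hn]
  · intro m hm
    simp only [Finset.mem_filter, Finset.mem_univ, true_and] at hm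
    obtain ⟨t, hmt⟩ := hm
    show f (m : ℕ) = f (n * ((m : ℕ) / n))
    rw [hmt, Nat.mul_div_cancel_left t hn]

/-- The normalized indicator vector of the subgroup `nZ_d ⊂ Z_d` is KD classical:
its Kirkwood-Dirac distribution with respect to the standard and Fourier bases
is everywhere a nonnegative real. -/
theorem subgroup_indicator_kd_classical (d n k : ℕ) (hd : 0 < d) (hn : n ∣ d)
    (hk : k = d / n) (ψ : Fin d → ℂ)
    (hψ : ∀ i : Fin d, ψ i = if n ∣ (i : ℕ) then (1 / Real.sqrt k : ℂ) else 0) :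
    ∀ i j : Fin d, ∃ r : ℝ, 0 ≤ r ∧ KD d ψ i j = (r : ℂ) := by
  have hn0 : 0 < n := Nat.pos_of_dvd_of_pos hn hd
  have hdk : d = n * k := by rw [hk, Nat.mul_div_cancel' hn]
  have hk0 : 0 < k := by
    rcases Nat.eq_zero_or_pos k with h | h
    · rw [h, mul_zero] at hdk; omega
    · exact h
  have hprim := dftOmega_prim hd
  intro i j
  -- compute the middle sum
  have hmid : (∑ m, (starRingEnd ℂ) (ψ m) * fourierVec d j m)
      = (1 / Real.sqrt k : ℂ) / Real.sqrt d * ∑ t ∈ Finset.range k, (dftOmega d ^ (n * j)) ^ t := by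
    have h1 : ∀ m : Fin d, (starRingEnd ℂ) (ψ m) * fourierVec d j m
        = if n ∣ (m : ℕ) then ((1 / Real.sqrt k : ℂ) / Real.sqrt d * dftOmega d ^ ((m : ℕ) * (j : ℕ))) else 0 := by
      intro m
      rw [hψ m]
      by_cases hdvd : n ∣ (m : ℕ) <;> simp [hdvd, fourierVec, map_div₀, Complex.conj_ofReal]
      ring
    rw [Finset.sum_congr rfl fun m _ => h1 m,
      sum_multiples hdk hn0 (fun m => (1 / Real.sqrt k : ℂ) / Real.sqrt d * dftOmega d ^ (m * (j : ℕ))),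
      Finset.mul_sum]
    refine Finset.sum_congr rfl fun t _ => ?_
    rw [← pow_mul]
    ring_nf
  by_cases hkj : k ∣ (j : ℕ)
  · -- the case k ∣ j
    by_cases hni : n ∣ (i : ℕ)
    · -- both divisibilities hold; KD = positive real
      have hx1 : dftOmega d ^ (n * (j : ℕ)) = 1 := by
        rw [hprim.pow_eq_one_iff_dvd]
        obtain ⟨b, hb⟩ := hkj
        exact ⟨b, by rw [hb]; rw [hdk]; ring⟩
      have hij1 : dftOmega d ^ ((i : ℕ) * (j : ℕ)) = 1 := by
        rw [hprim.pow_eq_one_iff_dvd]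
        obtain ⟨a, ha⟩ := hni
        obtain ⟨b, hb⟩ := hkj
        exact ⟨a * b, by rw [ha, hb]; rw [hdk]; ring⟩
      refine ⟨(1 / Real.sqrt k) * ((1 / Real.sqrt k / Real.sqrt d) * k) * (1 / Real.sqrt d), ?_, ?_⟩
      · positivity
      · rw [KD, hmid, hψ i]
        simp only [hni, if_true, hx1, one_pow, Finset.sum_const, Finset.card_range,
          nsmul_eq_mul, mul_one, fourierVec, hij1, map_div₀, map_one, Complex.conj_ofReal]
        push_cast
        ring
    · refine ⟨0, le_refl 0, ?_⟩
      rw [KD, hψ i]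
      simp [hni]
  · -- k ∤ j : the geometric sum vanishes
    have hx : dftOmega d ^ (n * (j : ℕ)) ≠ 1 := by
      rw [Ne, hprim.pow_eq_one_iff_dvd]
      intro ⟨b, hb⟩
      refine hkj ⟨b, ?_⟩
      have hh : n * (j : ℕ) = n * (k * b) := by rw [hb]; rw [hdk]; ring
      exact Nat.eq_of_mul_eq_mul_left hn0 hh
    have hsum : ∑ t ∈ Finset.range k, (dftOmega d ^ (n * (j : ℕ))) ^ t = 0 := by
      rw [geom_sum_eq hx]
      have : (dftOmega d ^ (n * (j : ℕ))) ^ k = 1 := by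
        rw [← pow_mul, hprim.pow_eq_one_iff_dvd]
        exact ⟨(j : ℕ), by rw [mul_right_comm, ← hdk]⟩
      rw [this, sub_self, zero_div]
    refine ⟨0, le_refl 0, ?_⟩
    rw [KD, hmid, hsum]
    simp
end
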